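/- Let Y = M_1, the Banach space of L^1-bounded martingales adapted to (Σ_n), with its norm topology. Then the set {(f, x) ∈ Y × K : limsup_{n→∞} f_n(x) = +∞ and liminf_{n→∞} f_n(x) = −∞} is a dense G_δ subset of Y × K. In particular, there is a dense G_δ set of f ∈ Y such that {x ∈ K : limsup_{n→∞} f_n(x) = +∞ and liminf_{n→∞} f_n(x) = −∞} is a dense G_δ subset of K. -/

import Mathlib

open MeasureTheory Filter Set
open scoped ENNReal Topology

noncomputable section

namespace MartingalePaper

variable {Ω : Type}

/-- The discrete topology on `Set Ω`; each finite partition `D n` thus carries the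
discrete topology, and `ℕ → Set Ω` the product topology. -/
instance : TopologicalSpace (Set Ω) := ⊥

/-- `(D n)` is a sequence of finite measurable partitions of `Ω`, each refined by the next. -/
def IsPartitionSeq [MeasurableSpace Ω] (D : ℕ → Finset (Set Ω)) : Prop :=
  (∀ n, ∀ A ∈ D n, MeasurableSet A) ∧
  (∀ n, ∀ A ∈ D n, A.Nonempty) ∧
  (∀ n, (D n : Set (Set Ω)).PairwiseDisjoint id) ∧
  (∀ n, ⋃ A ∈ D n, A = (Set.univ : Set Ω)) ∧
  (∀ n, ∀ A ∈ D (n + 1), ∃ B ∈ D n, A ⊆ B)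

/-- Standing Assumptions (A). -/
def AssumptionA [MeasurableSpace Ω] (P : Measure Ω) (D : ℕ → Finset (Set Ω)) : Prop :=
  (∀ n, ∀ A ∈ D n, 0 < P A) ∧ (∀ n, ∀ A ∈ D n, ∃ m, n < m ∧ A ∉ D m)

/-- The compact metrizable space `K` associated to the filtration: decreasing chains of atoms. -/
abbrev Kt (D : ℕ → Finset (Set Ω)) : Type _ :=
  {x : ℕ → Set Ω // (∀ n, x n ∈ D n) ∧ ∀ n m : ℕ, n ≤ m → x m ⊆ x n}

/-- The function on `Ω` determined by the values `f n A` on the atoms `A ∈ D n`. -/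
def mval (D : ℕ → Finset (Set Ω)) (f : ℕ → Set Ω → ℝ) (n : ℕ) (w : Ω) : ℝ :=
  ∑ A ∈ D n, A.indicator (fun _ => f n A) w

/-- A martingale adapted to the filtration `(σ(D n))`, in its canonical representation by
the (a.e. constant) values on the atoms:  `f n A` is the value of the `n`-th function on
the atom `A ∈ D n`. -/
def IsMart [MeasurableSpace Ω] (P : Measure Ω) (D : ℕ → Finset (Set Ω))
    (f : ℕ → Set Ω → ℝ) : Prop :=
  (∀ n, ∀ A : Set Ω, A ∉ D n → f n A = 0) ∧
  ∀ n m : ℕ, n ≤ m → ∀ A ∈ D n,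
    ∫ w in A, mval D f n w ∂P = ∫ w in A, mval D f m w ∂P

/-- `‖f_n‖_{L^p}`. -/
def lpNorm [MeasurableSpace Ω] (P : Measure Ω) (D : ℕ → Finset (Set Ω)) (p : ℝ≥0∞)
    (f : ℕ → Set Ω → ℝ) (n : ℕ) : ℝ≥0∞ :=
  eLpNorm (mval D f n) p P

/-- `‖f‖_p = sup_n ‖f_n‖_{L^p}`. -/
def martNorm [MeasurableSpace Ω] (P : Measure Ω) (D : ℕ → Finset (Set Ω)) (p : ℝ≥0∞)
    (f : ℕ → Set Ω → ℝ) : ℝ≥0∞ :=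
  ⨆ n, lpNorm P D p f n

/-- `M_p`, the space of `L^p`-bounded martingales adapted to the filtration. -/
def Mart [MeasurableSpace Ω] (P : Measure Ω) (D : ℕ → Finset (Set Ω)) (p : ℝ≥0∞) : Type _ :=
  {f : ℕ → Set Ω → ℝ // IsMart P D f ∧ martNorm P D p f ≠ ∞}

/-- The norm topology on `M_p`: the topology generated by the balls of the norm `‖·‖_p`
(which is exactly the topology of this metric). -/
instance [MeasurableSpace Ω] (P : Measure Ω) (D : ℕ → Finset (Set Ω)) (p : ℝ≥0∞) :
    TopologicalSpace (Mart P D p) :=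
  TopologicalSpace.generateFrom
    {s | ∃ (f : Mart P D p) (ε : ℝ≥0∞), 0 < ε ∧
      s = {g : Mart P D p | martNorm P D p (fun k A => g.1 k A - f.1 k A) < ε}}

/-- `limsup f_n(x) = +∞` and `liminf f_n(x) = -∞`. -/
def DivergesAt (D : ℕ → Finset (Set Ω)) (f : ℕ → Set Ω → ℝ) (x : Kt D) : Prop :=
  Filter.limsup (fun n => ((f n (x.1 n) : ℝ) : EReal)) Filter.atTop = ⊤ ∧
  Filter.liminf (fun n => ((f n (x.1 n) : ℝ) : EReal)) Filter.atTop = ⊥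

/-!
`M₁` is complete for `‖·‖₁` and `K` is compact, so both are Baire spaces. For `k ∈ ℕ` the pairs
`(f, x)` with `f_m(x_m) > k` for some `m ≥ k`, and those with `f_m(x_m) < -k` for some `m ≥ k`,
form open subsets `W` of `M₁ × K` whose intersection is the divergence set, which is therefore a
`G_δ`. For each such `W` and each nonempty open `V ⊆ K`, the martingales `f` with `(f, x) ∈ W`
for some `x ∈ V` are dense: `V` contains the cylinder over an atom `A`, and adding to `f` a
small multiple of the closed martingale `E[1_B | Σ_j]` moves the value of `f` on an atom `B ⊆ A`
of high level to any prescribed number. A suitable `B`, with `P(B)` and `∫_B |f_m|` small,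
exists because by Assumption (A) the number of atoms below `A` is unbounded. Baire's theorem in
`M₁` gives a dense `G_δ` set of `f` all of whose sections `W_f` are dense, Baire's theorem in `K`
shows that each such `f` diverges on a dense `G_δ` subset of `K`, and hence the divergence set is
dense in `M₁ × K`.
-/

open TopologicalSpace

section Sections

variable {ι X Y : Type*} [TopologicalSpace X] [TopologicalSpace Y]

theorem isOpen_setOf_exists_prodMk_mem {W : Set (Y × X)} (hW : IsOpen W) (V : Set X) :
    IsOpen {y | ∃ x ∈ V, (y, x) ∈ W} := by
  have : {y | ∃ x ∈ V, (y, x) ∈ W} = ⋃ x ∈ V, (fun y => (y, x)) ⁻¹' W := by ext; simp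
  rw [this]
  exact isOpen_biUnion fun x _ => hW.preimage (Continuous.prodMk_left x)

omit [TopologicalSpace Y] in
theorem setOf_forall_dense_eq_iInter [SecondCountableTopology X] (W : ι → Set (Y × X)) :
    {y | ∀ i, Dense {x | (y, x) ∈ W i}} =
      ⋂ p : ι × countableBasis X, {y | ∃ x ∈ (p.2 : Set X), (y, x) ∈ W p.1} := by
  ext y
  simp only [mem_ofPred_eq, mem_iInter, Prod.forall, Subtype.forall,
    (isBasis_countableBasis X).dense_iff]
  exact forall_congr' fun i => forall₂_congr fun b hb =>
    ⟨fun h => h (nonempty_of_mem_countableBasis hb), fun h _ => h⟩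

theorem isGδ_setOf_forall_dense [Countable ι] [SecondCountableTopology X] {W : ι → Set (Y × X)}
    (hW : ∀ i, IsOpen (W i)) : IsGδ {y | ∀ i, Dense {x | (y, x) ∈ W i}} := by
  have := (countable_countableBasis X).to_subtype
  rw [setOf_forall_dense_eq_iInter]
  exact IsGδ.iInter_of_isOpen fun p => isOpen_setOf_exists_prodMk_mem (hW p.1) _

theorem dense_setOf_forall_dense [BaireSpace Y] [Countable ι] [SecondCountableTopology X]
    {W : ι → Set (Y × X)} (hW : ∀ i, IsOpen (W i))
    (hd : ∀ i V, IsOpen V → V.Nonempty → Dense {y | ∃ x ∈ V, (y, x) ∈ W i}) :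
    Dense {y | ∀ i, Dense {x | (y, x) ∈ W i}} := by
  have := (countable_countableBasis X).to_subtype
  rw [setOf_forall_dense_eq_iInter]
  exact dense_iInter_of_isOpen (fun p => isOpen_setOf_exists_prodMk_mem (hW p.1) _)
    fun p => hd p.1 p.2 (isOpen_of_mem_countableBasis p.2.2)
      (nonempty_of_mem_countableBasis p.2.2)

theorem dense_of_forall_dense_section {S : Set (Y × X)} {T : Set Y} (hT : Dense T)
    (hS : ∀ y ∈ T, Dense {x | (y, x) ∈ S}) : Dense S := by
  refine dense_iff_inter_open.2 fun U hU ⟨⟨y₀, x₀⟩, hU₀⟩ => ?_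
  obtain ⟨u, v, hu, hv, hy₀, hx₀, huv⟩ := isOpen_prod_iff.1 hU y₀ x₀ hU₀
  obtain ⟨y, hyu, hyT⟩ := hT.inter_open_nonempty u hu ⟨y₀, hy₀⟩
  obtain ⟨x, hxv, hxS⟩ := (hS y hyT).inter_open_nonempty v hv ⟨x₀, hx₀⟩
  exact ⟨(y, x), huv ⟨hyu, hxv⟩, hxS⟩

end Sections

section Escape

variable {Z : Type*}

def escapeSet (F : ℕ → Z → ℝ) : ℕ ⊕ ℕ → Set Z
  | .inl k => ⋃ m ≥ k, {z | (k : ℝ) < F m z}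
  | .inr k => ⋃ m ≥ k, {z | F m z < -k}

theorem preimage_escapeSet {Z' : Type*} (F : ℕ → Z → ℝ) (g : Z' → Z) (i : ℕ ⊕ ℕ) :
    g ⁻¹' escapeSet F i = escapeSet (fun m => F m ∘ g) i := by
  cases i <;> simp [escapeSet]

theorem isOpen_escapeSet [TopologicalSpace Z] {F : ℕ → Z → ℝ} (hF : ∀ m, Continuous (F m)) :
    ∀ i, IsOpen (escapeSet F i)
  | .inl _ => isOpen_biUnion fun m _ => isOpen_lt continuous_const (hF m)
  | .inr _ => isOpen_biUnion fun m _ => isOpen_lt (hF m) continuous_const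

theorem limsup_coe_eq_top_iff (u : ℕ → ℝ) :
    limsup (fun n => (u n : EReal)) atTop = ⊤ ↔ ∀ k : ℕ, ∃ m ≥ k, (k : ℝ) < u m := by
  simp only [limsup_eq_iInf_iSup_of_nat, iInf_eq_top, iSup₂_eq_top]
  refine ⟨fun h k => ?_, fun h n b hb => ?_⟩
  · obtain ⟨m, hm, hkm⟩ := h k k (EReal.coe_lt_top _)
    exact ⟨m, hm, by exact_mod_cast hkm⟩
  · obtain ⟨r, hbr, -⟩ := EReal.lt_iff_exists_real_btwn.1 hb
    obtain ⟨k, hk⟩ := exists_nat_gt r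
    obtain ⟨m, hm, hkm⟩ := h (max n k)
    refine ⟨m, le_of_max_le_left hm, hbr.trans (EReal.coe_lt_coe_iff.2 ?_)⟩
    exact hk.trans ((Nat.cast_le.2 (le_max_right n k)).trans_lt hkm)

theorem liminf_coe_eq_bot_iff (u : ℕ → ℝ) :
    liminf (fun n => (u n : EReal)) atTop = ⊥ ↔ ∀ k : ℕ, ∃ m ≥ k, u m < -k := by
  have hneg : liminf (fun n => (u n : EReal)) atTop =
      -limsup (fun n => ((-u n : ℝ) : EReal)) atTop := by
    rw [← EReal.liminf_neg]
    simp [Pi.neg_def]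
  rw [hneg, EReal.neg_eq_bot_iff, limsup_coe_eq_top_iff]
  simp only [lt_neg]

theorem setOf_limsup_eq_top_and_liminf_eq_bot (F : ℕ → Z → ℝ) :
    {z | limsup (fun n => (F n z : EReal)) atTop = ⊤ ∧
      liminf (fun n => (F n z : EReal)) atTop = ⊥} = ⋂ i, escapeSet F i := by
  ext z
  simp only [mem_ofPred_eq, mem_iInter, Sum.forall, limsup_coe_eq_top_iff,
    liminf_coe_eq_bot_iff, escapeSet, mem_iUnion, exists_prop]

end Escape

instance : DiscreteTopology (Set Ω) := ⟨rfl⟩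

namespace IsPartitionSeq

variable [MeasurableSpace Ω] {D : ℕ → Finset (Set Ω)} (hp : IsPartitionSeq D)
include hp

theorem measurableSet {n : ℕ} {A : Set Ω} (hA : A ∈ D n) : MeasurableSet A := hp.1 n A hA

theorem nonempty {n : ℕ} {A : Set Ω} (hA : A ∈ D n) : A.Nonempty := hp.2.1 n A hA

theorem eq_of_mem_of_mem {n : ℕ} {A B : Set Ω} {w : Ω} (hA : A ∈ D n) (hB : B ∈ D n)
    (hwA : w ∈ A) (hwB : w ∈ B) : A = B :=
  by_contra fun hne => Set.disjoint_left.1 (hp.2.2.1 n hA hB hne) hwA hwB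

theorem exists_mem (n : ℕ) (w : Ω) : ∃ A ∈ D n, w ∈ A := by
  have hw : w ∈ ⋃ A ∈ D n, A := (hp.2.2.2.1 n).symm ▸ Set.mem_univ w
  simpa using hw

theorem exists_superset {n m : ℕ} (hnm : n ≤ m) {B : Set Ω} (hB : B ∈ D m) :
    ∃ A ∈ D n, B ⊆ A := by
  induction m, hnm using Nat.le_induction generalizing B with
  | base => exact ⟨B, hB, subset_rfl⟩
  | succ m _ ih =>
    obtain ⟨C, hC, hBC⟩ := hp.2.2.2.2 m B hB
    obtain ⟨A, hA, hCA⟩ := ih hC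
    exact ⟨A, hA, hBC.trans hCA⟩

theorem subset_of_mem {n m : ℕ} (hnm : n ≤ m) {A B : Set Ω} {w : Ω} (hA : A ∈ D n)
    (hB : B ∈ D m) (hwA : w ∈ A) (hwB : w ∈ B) : B ⊆ A := by
  obtain ⟨A', hA', hBA'⟩ := hp.exists_superset hnm hB
  rwa [hp.eq_of_mem_of_mem hA hA' hwA (hBA' hwB)]

theorem subset_or_disjoint {n m : ℕ} (hnm : n ≤ m) {A B : Set Ω} (hA : A ∈ D n)
    (hB : B ∈ D m) : B ⊆ A ∨ Disjoint B A := by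
  by_cases h : Disjoint B A
  · exact Or.inr h
  · obtain ⟨w, hwB, hwA⟩ := Set.not_disjoint_iff.1 h
    exact Or.inl (hp.subset_of_mem hnm hA hB hwA hwB)

theorem sum_indicator_eq {M : Type*} [AddCommMonoid M] {n : ℕ} {A : Set Ω} {w : Ω}
    (hA : A ∈ D n) (hw : w ∈ A) (g : Set Ω → M) :
    ∑ B ∈ D n, B.indicator (fun _ => g B) w = g A := by
  rw [Finset.sum_eq_single_of_mem A hA fun B hB hne => Set.indicator_of_notMem
    (fun hwB => hne (hp.eq_of_mem_of_mem hB hA hwB hw)) _]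
  exact Set.indicator_of_mem hw _

theorem sum_measureReal_inter (μ : Measure Ω) [IsFiniteMeasure μ] {S : Set Ω}
    (hS : MeasurableSet S) (n : ℕ) : ∑ B ∈ D n, μ.real (S ∩ B) = μ.real S := by
  rw [← measureReal_biUnion_finset (f := fun B => S ∩ B)
    (fun A hA B hB hAB => (hp.2.2.1 n hA hB hAB).mono inter_subset_right inter_subset_right)
    fun B hB => hS.inter (hp.measurableSet hB), ← Set.inter_iUnion₂, hp.2.2.2.1 n, inter_univ]

end IsPartitionSeq

open scoped Classical in
def atomsIn (D : ℕ → Finset (Set Ω)) (m : ℕ) (A : Set Ω) : Finset (Set Ω) :=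
  (D m).filter (· ⊆ A)

theorem mem_atomsIn {D : ℕ → Finset (Set Ω)} {m : ℕ} {A B : Set Ω} :
    B ∈ atomsIn D m A ↔ B ∈ D m ∧ B ⊆ A := by
  simp [atomsIn]

section AtomsIn

variable [MeasurableSpace Ω] {D : ℕ → Finset (Set Ω)} (hp : IsPartitionSeq D)
include hp

theorem atomsIn_nonempty {n m : ℕ} (hnm : n ≤ m) {A : Set Ω} (hA : A ∈ D n) :
    (atomsIn D m A).Nonempty := by
  obtain ⟨w, hw⟩ := hp.nonempty hA
  obtain ⟨B, hB, hwB⟩ := hp.exists_mem m w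
  exact ⟨B, mem_atomsIn.2 ⟨hB, hp.subset_of_mem hnm hA hB hw hwB⟩⟩

theorem biUnion_atomsIn {n m m' : ℕ} (hnm : n ≤ m) (hmm' : m ≤ m') {A : Set Ω}
    (hA : A ∈ D n) : (atomsIn D m A).biUnion (atomsIn D m') = atomsIn D m' A := by
  ext E
  simp only [Finset.mem_biUnion, mem_atomsIn]
  constructor
  · rintro ⟨C, ⟨-, hCA⟩, hE, hEC⟩
    exact ⟨hE, hEC.trans hCA⟩
  · rintro ⟨hE, hEA⟩
    obtain ⟨C, hC, hEC⟩ := hp.exists_superset hmm' hE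
    obtain ⟨w, hw⟩ := hp.nonempty hE
    exact ⟨C, ⟨hC, hp.subset_of_mem hnm hA hC (hEA hw) (hEC hw)⟩, hE, hEC⟩

theorem one_lt_card_atomsIn {m m' : ℕ} (hmm' : m ≤ m') {C : Set Ω} (hC : C ∈ D m)
    (hC' : C ∉ D m') : 1 < (atomsIn D m' C).card := by
  obtain ⟨E, hE⟩ := atomsIn_nonempty hp hmm' hC
  refine Finset.one_lt_card_iff_nontrivial.2
    ((Finset.eq_singleton_or_nontrivial hE).resolve_left fun hsingle => hC' ?_)
  obtain ⟨hEm, hEC⟩ := mem_atomsIn.1 hE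
  suffices C ⊆ E from (hEC.antisymm this) ▸ hEm
  intro w hw
  obtain ⟨E', hE', hwE'⟩ := hp.exists_mem m' w
  have : E' ∈ atomsIn D m' C := mem_atomsIn.2 ⟨hE', hp.subset_of_mem hmm' hC hE' hw hwE'⟩
  rw [hsingle, Finset.mem_singleton] at this
  rwa [← this]

theorem card_atomsIn_lt {n m m' : ℕ} (hnm : n ≤ m) (hmm' : m ≤ m') {A C : Set Ω}
    (hA : A ∈ D n) (hC : C ∈ atomsIn D m A) (hC' : C ∉ D m') :
    (atomsIn D m A).card < (atomsIn D m' A).card := by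
  classical
  have hdisj : (atomsIn D m A : Set (Set Ω)).PairwiseDisjoint (atomsIn D m') := by
    intro C₁ h₁ C₂ h₂ hne
    refine Finset.disjoint_left.2 fun E hE₁ hE₂ => hne ?_
    obtain ⟨w, hw⟩ := hp.nonempty (mem_atomsIn.1 hE₁).1
    exact hp.eq_of_mem_of_mem (mem_atomsIn.1 h₁).1 (mem_atomsIn.1 h₂).1
      ((mem_atomsIn.1 hE₁).2 hw) ((mem_atomsIn.1 hE₂).2 hw)
  rw [← biUnion_atomsIn hp hnm hmm' hA, Finset.card_biUnion hdisj, Finset.card_eq_sum_ones]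
  refine Finset.sum_lt_sum (fun C₁ h₁ => Finset.card_pos.2 ?_) ⟨C, hC, ?_⟩
  · exact atomsIn_nonempty hp hmm' (mem_atomsIn.1 h₁).1
  · exact one_lt_card_atomsIn hp hmm' (mem_atomsIn.1 hC).1 hC'

theorem exists_le_card_atomsIn (hsplit : ∀ n, ∀ A ∈ D n, ∃ m, n < m ∧ A ∉ D m) {n : ℕ}
    {A : Set Ω} (hA : A ∈ D n) (K N : ℕ) :
    ∃ m, N ≤ m ∧ n ≤ m ∧ K ≤ (atomsIn D m A).card := by
  induction K with
  | zero => exact ⟨max N n, le_max_left _ _, le_max_right _ _, Nat.zero_le _⟩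
  | succ K ih =>
    obtain ⟨m, hNm, hnm, hK⟩ := ih
    obtain ⟨C, hC⟩ := atomsIn_nonempty hp hnm hA
    obtain ⟨m', hmm', hC'⟩ := hsplit m C (mem_atomsIn.1 hC).1
    exact ⟨m', hNm.trans hmm'.le, hnm.trans hmm'.le,
      hK.trans_lt (card_atomsIn_lt hp hnm hmm'.le hA hC hC')⟩

end AtomsIn

section MartNorm

variable {D : ℕ → Finset (Set Ω)}

theorem mval_add (f g : ℕ → Set Ω → ℝ) (n : ℕ) :
    mval D (fun k A => f k A + g k A) n = mval D f n + mval D g n := by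
  ext w
  simp only [mval, Pi.add_apply, ← Finset.sum_add_distrib]
  exact Finset.sum_congr rfl fun A _ => by by_cases hw : w ∈ A <;> simp [hw]

theorem mval_const_mul (c : ℝ) (f : ℕ → Set Ω → ℝ) (n : ℕ) :
    mval D (fun k A => c * f k A) n = c • mval D f n := by
  ext w
  simp only [mval, Pi.smul_apply, smul_eq_mul, Finset.mul_sum]
  exact Finset.sum_congr rfl fun A _ => by by_cases hw : w ∈ A <;> simp [hw]

variable [MeasurableSpace Ω] {P : Measure Ω}

theorem martNorm_const_mul (c : ℝ) (f : ℕ → Set Ω → ℝ) :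
    martNorm P D 1 (fun k A => c * f k A) = ‖c‖ₑ * martNorm P D 1 f := by
  simp only [martNorm, lpNorm, mval_const_mul, eLpNorm_const_smul, ENNReal.mul_iSup]

theorem martNorm_add_le (hp : IsPartitionSeq D) (f g : ℕ → Set Ω → ℝ) :
    martNorm P D 1 (fun k A => f k A + g k A) ≤ martNorm P D 1 f + martNorm P D 1 g := by
  refine iSup_le fun n => ?_
  have hmeas : ∀ h : ℕ → Set Ω → ℝ, AEStronglyMeasurable (mval D h n) P := fun h =>
    (Finset.measurable_sum _ fun A hA =>
      measurable_const.indicator (hp.measurableSet hA)).aestronglyMeasurable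
  calc lpNorm P D 1 (fun k A => f k A + g k A) n ≤ lpNorm P D 1 f n + lpNorm P D 1 g n := by
        simpa only [lpNorm, mval_add] using eLpNorm_add_le (hmeas f) (hmeas g) le_rfl
    _ ≤ martNorm P D 1 f + martNorm P D 1 g := add_le_add (le_iSup _ n) (le_iSup _ n)

theorem integral_mval (hp : IsPartitionSeq D) (μ : Measure Ω) [IsFiniteMeasure μ]
    (f : ℕ → Set Ω → ℝ) (n : ℕ) :
    ∫ w, mval D f n w ∂μ = ∑ B ∈ D n, μ.real B * f n B := by
  unfold mval
  rw [integral_finsetSum _ fun B hB =>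
    (integrable_const (f n B)).indicator (hp.measurableSet hB)]
  exact Finset.sum_congr rfl fun B hB => integral_indicator_const _ (hp.measurableSet hB)

variable [IsFiniteMeasure P] (hp : IsPartitionSeq D)
include hp

theorem setIntegral_mval (A : Set Ω) (f : ℕ → Set Ω → ℝ) (n : ℕ) :
    ∫ w in A, mval D f n w ∂P = ∑ B ∈ D n, P.real (B ∩ A) * f n B := by
  rw [integral_mval hp]
  exact Finset.sum_congr rfl fun B hB => by rw [measureReal_restrict_apply (hp.measurableSet hB)]

theorem lpNorm_one_eq (f : ℕ → Set Ω → ℝ) (n : ℕ) :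
    lpNorm P D 1 f n = ENNReal.ofReal (∑ B ∈ D n, P.real B * |f n B|) := by
  have habs : (fun w => ‖mval D f n w‖) = mval D (fun k A => |f k A|) n := by
    ext w
    obtain ⟨A, hA, hwA⟩ := hp.exists_mem n w
    simp only [mval, hp.sum_indicator_eq hA hwA, Real.norm_eq_abs]
  have hint : Integrable (mval D f n) P :=
    integrable_finsetSum _ fun B hB => (integrable_const (f n B)).indicator (hp.measurableSet hB)
  rw [lpNorm, eLpNorm_one_eq_lintegral_enorm, ← ofReal_integral_norm_eq_lintegral_enorm hint,
    habs, integral_mval hp]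

theorem ofReal_measureReal_mul_le_martNorm {n : ℕ} {A : Set Ω} (hA : A ∈ D n)
    (f : ℕ → Set Ω → ℝ) : ENNReal.ofReal (P.real A * |f n A|) ≤ martNorm P D 1 f :=
  calc ENNReal.ofReal (P.real A * |f n A|) ≤ lpNorm P D 1 f n := by
        rw [lpNorm_one_eq hp]
        exact ENNReal.ofReal_le_ofReal <|
          Finset.single_le_sum (fun B _ => by positivity) (f := fun B => P.real B * |f n B|) hA
    _ ≤ martNorm P D 1 f := le_iSup _ n

theorem sum_measureReal_mul_le_martNorm {f : ℕ → Set Ω → ℝ} (hf : martNorm P D 1 f ≠ ∞)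
    (n : ℕ) : ∑ B ∈ D n, P.real B * |f n B| ≤ (martNorm P D 1 f).toReal := by
  have hle : lpNorm P D 1 f n ≤ martNorm P D 1 f := le_iSup _ n
  rw [lpNorm_one_eq hp] at hle
  exact (ENNReal.ofReal_le_iff_le_toReal hf).1 hle

theorem martNorm_le_of_tendsto {v : ℕ → ℕ → Set Ω → ℝ} {w : ℕ → Set Ω → ℝ}
    (hv : ∀ n A, Tendsto (fun j => v j n A) atTop (𝓝 (w n A))) {ε : ℝ≥0∞}
    (hε : ∀ᶠ j in atTop, martNorm P D 1 (v j) ≤ ε) : martNorm P D 1 w ≤ ε := by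
  refine iSup_le fun n => ?_
  rw [lpNorm_one_eq hp]
  refine le_of_tendsto (ENNReal.tendsto_ofReal (tendsto_finsetSum _ fun B _ =>
    ((hv n B).abs).const_mul _)) (hε.mono fun j hj => ?_)
  exact (lpNorm_one_eq hp (v j) n).symm.trans_le ((le_iSup _ n).trans hj)

end MartNorm

section Martingale

variable [MeasurableSpace Ω] {P : Measure Ω} [IsFiniteMeasure P] {D : ℕ → Finset (Set Ω)}
  (hp : IsPartitionSeq D)
include hp

theorem isMart_iff {f : ℕ → Set Ω → ℝ} :
    IsMart P D f ↔ (∀ n, ∀ A, A ∉ D n → f n A = 0) ∧ ∀ n m : ℕ, n ≤ m → ∀ A ∈ D n,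
      ∑ B ∈ D n, P.real (B ∩ A) * f n B = ∑ B ∈ D m, P.real (B ∩ A) * f m B := by
  refine and_congr_right' (forall₃_congr fun n m _ => forall₂_congr fun A hA => ?_)
  rw [setIntegral_mval hp, setIntegral_mval hp]

theorem IsMart.add_const_mul {f g : ℕ → Set Ω → ℝ} (hf : IsMart P D f) (hg : IsMart P D g)
    (c : ℝ) : IsMart P D (fun k A => f k A + c * g k A) := by
  rw [isMart_iff hp] at hf hg ⊢
  refine ⟨fun n A hA => by simp [hf.1 n A hA, hg.1 n A hA], fun n m hnm A hA => ?_⟩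
  simp only [mul_add, Finset.sum_add_distrib, mul_left_comm _ c, ← Finset.mul_sum,
    hf.2 n m hnm A hA, hg.2 n m hnm A hA]

theorem isMart_of_tendsto {u : ℕ → ℕ → Set Ω → ℝ} {f : ℕ → Set Ω → ℝ}
    (hu : ∀ j, IsMart P D (u j)) (hf : ∀ n A, Tendsto (fun j => u j n A) atTop (𝓝 (f n A))) :
    IsMart P D f := by
  simp only [isMart_iff hp] at hu ⊢
  have hsum : ∀ k A, Tendsto (fun j => ∑ B ∈ D k, P.real (B ∩ A) * u j k B) atTop
      (𝓝 (∑ B ∈ D k, P.real (B ∩ A) * f k B)) := fun k A =>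
    tendsto_finsetSum _ fun B _ => (hf k B).const_mul _
  refine ⟨fun n A hA => tendsto_nhds_unique (hf n A) ?_, fun n m hnm A hA => ?_⟩
  · simp only [(hu _).1 n A hA, tendsto_const_nhds]
  · exact tendsto_nhds_unique (hsum n A)
      ((hsum m A).congr fun j => ((hu j).2 n m hnm A hA).symm)

end Martingale

/-- The closed martingale `E[1_S | σ(D k)]`. -/
def condProb [MeasurableSpace Ω] (P : Measure Ω) (D : ℕ → Finset (Set Ω)) (S : Set Ω) (k : ℕ)
    (E : Set Ω) : ℝ :=
  if E ∈ D k then P.real (S ∩ E) / P.real E else 0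

section CondProb

theorem measureReal_pos_of_mem [MeasurableSpace Ω] {P : Measure Ω} [IsFiniteMeasure P]
    {D : ℕ → Finset (Set Ω)} (hpos : ∀ n, ∀ A ∈ D n, 0 < P A) {n : ℕ} {A : Set Ω}
    (hA : A ∈ D n) : 0 < P.real A :=
  ENNReal.toReal_pos (hpos n A hA).ne' (measure_ne_top P A)

theorem condProb_self [MeasurableSpace Ω] {P : Measure Ω} [IsFiniteMeasure P]
    {D : ℕ → Finset (Set Ω)} (hpos : ∀ n, ∀ A ∈ D n, 0 < P A) {m : ℕ} {B : Set Ω}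
    (hB : B ∈ D m) : condProb P D B m B = 1 := by
  rw [condProb, if_pos hB, inter_self, div_self (measureReal_pos_of_mem hpos hB).ne']

variable [MeasurableSpace Ω] {P : Measure Ω} [IsFiniteMeasure P] {D : ℕ → Finset (Set Ω)}
  (hp : IsPartitionSeq D) (hpos : ∀ n, ∀ A ∈ D n, 0 < P A)
include hp hpos

theorem sum_measureReal_mul_condProb {S : Set Ω} (hS : MeasurableSet S) {n m : ℕ}
    (hnm : n ≤ m) {A : Set Ω} (hA : A ∈ D n) :
    ∑ B ∈ D m, P.real (B ∩ A) * condProb P D S m B = P.real (S ∩ A) := by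
  rw [← hp.sum_measureReal_inter P (hS.inter (hp.measurableSet hA)) m]
  refine Finset.sum_congr rfl fun B hB => ?_
  rw [condProb, if_pos hB]
  rcases hp.subset_or_disjoint hnm hA hB with hBA | hBA
  · rw [inter_eq_left.2 hBA, mul_div_cancel₀ _ (measureReal_pos_of_mem hpos hB).ne',
      inter_assoc, inter_eq_right.2 hBA]
  · rw [hBA.inter_eq, inter_assoc, inter_comm A, hBA.inter_eq]
    simp

theorem isMart_condProb {S : Set Ω} (hS : MeasurableSet S) : IsMart P D (condProb P D S) := by
  refine (isMart_iff hp).2 ⟨fun n A hA => if_neg hA, fun n m hnm A hA => ?_⟩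
  rw [sum_measureReal_mul_condProb hp hpos hS le_rfl hA,
    sum_measureReal_mul_condProb hp hpos hS hnm hA]

theorem martNorm_condProb_le {S : Set Ω} (hS : MeasurableSet S) :
    martNorm P D 1 (condProb P D S) ≤ P S := by
  refine iSup_le fun n => ?_
  rw [lpNorm_one_eq hp, ← ofReal_measureReal, ← hp.sum_measureReal_inter P hS n]
  refine ENNReal.ofReal_le_ofReal (Finset.sum_le_sum fun B hB => ?_)
  rw [condProb, if_pos hB, abs_of_nonneg (by positivity),
    mul_div_cancel₀ _ (measureReal_pos_of_mem hpos hB).ne']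

end CondProb

section MartEMetric

variable [MeasurableSpace Ω] {P : Measure Ω} {D : ℕ → Finset (Set Ω)}

theorem martNorm_sub_comm (f g : ℕ → Set Ω → ℝ) :
    martNorm P D 1 (fun k A => f k A - g k A) = martNorm P D 1 (fun k A => g k A - f k A) := by
  simpa using martNorm_const_mul (P := P) (D := D) (-1) (fun k A => g k A - f k A)

abbrev martEMetric (hp : IsPartitionSeq D) : PseudoEMetricSpace (Mart P D 1) where
  edist f g := martNorm P D 1 (fun k A => f.1 k A - g.1 k A)
  edist_self f := by simpa using martNorm_const_mul (P := P) (D := D) 0 f.1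
  edist_comm f g := martNorm_sub_comm _ _
  edist_triangle f g h := by
    simpa using martNorm_add_le hp (fun k A => f.1 k A - g.1 k A) (fun k A => g.1 k A - h.1 k A)

theorem topology_eq_martEMetric (hp : IsPartitionSeq D) :
    (inferInstance : TopologicalSpace (Mart P D 1)) =
      (martEMetric hp).toUniformSpace.toTopologicalSpace := by
  let := martEMetric (P := P) hp
  refine le_antisymm (fun U hU => ?_) (le_generateFrom ?_)
  · refine isOpen_iff_forall_mem_open.2 fun f hf => ?_
    obtain ⟨ε, hε, hball⟩ := EMetric.isOpen_iff.1 hU f hf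
    exact ⟨_, hball, TopologicalSpace.isOpen_generateFrom_of_mem ⟨f, ε, hε, rfl⟩,
      Metric.mem_eball_self hε⟩
  · rintro _ ⟨f, ε, -, rfl⟩
    exact Metric.isOpen_eball

/-- `martEMetric`, with its topology made definitionally the given norm topology. -/
instance [Fact (IsPartitionSeq D)] : PseudoEMetricSpace (Mart P D 1) :=
  (martEMetric Fact.out).replaceUniformity
    (U := (martEMetric Fact.out).toUniformSpace.replaceTopology
      (topology_eq_martEMetric Fact.out)) rfl

variable [IsFiniteMeasure P]

theorem Mart.uniformContinuous_apply [Fact (IsPartitionSeq D)]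
    (hpos : ∀ n, ∀ A ∈ D n, 0 < P A) (n : ℕ) (A : Set Ω) :
    UniformContinuous fun g : Mart P D 1 => g.1 n A := by
  by_cases hA : A ∈ D n
  · refine EMetric.uniformContinuous_iff.2 fun ε hε => ⟨P A * ε,
      ENNReal.mul_pos (hpos n A hA).ne' hε.ne', fun {f g} hfg => ?_⟩
    have hle : P A * ENNReal.ofReal |f.1 n A - g.1 n A| ≤ edist f g := by
      rw [← ofReal_measureReal, ← ENNReal.ofReal_mul measureReal_nonneg]
      exact ofReal_measureReal_mul_le_martNorm Fact.out hA (fun k B => f.1 k B - g.1 k B)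
    rw [edist_dist, Real.dist_eq]
    exact (ENNReal.mul_lt_mul_iff_right (hpos n A hA).ne' (measure_ne_top P A)).1
      (hle.trans_lt hfg)
  · simp only [fun g : Mart P D 1 => g.2.1.1 n A hA]
    exact uniformContinuous_const

theorem Mart.completeSpace [Fact (IsPartitionSeq D)] (hpos : ∀ n, ∀ A ∈ D n, 0 < P A) :
    CompleteSpace (Mart P D 1) := by
  have hp : IsPartitionSeq D := Fact.out
  refine EMetric.complete_of_cauchySeq_tendsto fun u hu => ?_
  choose g hg using fun n A =>
    cauchySeq_tendsto_of_complete ((Mart.uniformContinuous_apply hpos n A).comp_cauchySeq hu)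
  have hclose :
      ∀ ε > 0, ∃ N, ∀ k ≥ N, martNorm P D 1 (fun n A => (u k).1 n A - g n A) ≤ ε := by
    intro ε hε
    obtain ⟨N, hN⟩ := EMetric.cauchySeq_iff.1 hu ε hε
    exact ⟨N, fun k hk => martNorm_le_of_tendsto hp (fun n A => tendsto_const_nhds.sub (hg n A))
      (eventually_atTop.2 ⟨N, fun j hj => (hN k hk j hj).le⟩)⟩
  have hfin : martNorm P D 1 g ≠ ∞ := by
    obtain ⟨N, hN⟩ := hclose 1 one_pos
    refine (lt_of_le_of_lt ?_ (ENNReal.add_lt_top.2 ⟨(u N).2.2.lt_top,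
      ((martNorm_sub_comm _ _).trans_le (hN N le_rfl)).trans_lt ENNReal.one_lt_top⟩)).ne
    simpa using martNorm_add_le hp (u N).1 (fun n A => g n A - (u N).1 n A)
  exact ⟨⟨g, isMart_of_tendsto hp (fun j => (u j).2.1) hg, hfin⟩,
    tendsto_iff_edist_tendsto_0.2 (ENNReal.tendsto_atTop_zero.2 hclose)⟩

theorem Mart.baireSpace (hp : IsPartitionSeq D) (hpos : ∀ n, ∀ A ∈ D n, 0 < P A) :
    BaireSpace (Mart P D 1) := by
  have : Fact (IsPartitionSeq D) := ⟨hp⟩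
  have := Mart.completeSpace (P := P) hpos
  infer_instance

end MartEMetric

namespace Kt

variable {D : ℕ → Finset (Set Ω)}

theorem isOpen_setOf_apply_eq (n : ℕ) (A : Set Ω) : IsOpen {x : Kt D | x.1 n = A} :=
  (isOpen_discrete {A}).preimage
    ((continuous_apply (A := fun _ => Set Ω) n).comp continuous_subtype_val)

instance : CompactSpace (Kt D) := by
  have hclosed : IsClosed {x : ℕ → Set Ω | (∀ n, x n ∈ D n) ∧ ∀ n m, n ≤ m → x m ⊆ x n} := by
    have hcont (n : ℕ) : Continuous fun x : ℕ → Set Ω => x n := continuous_apply n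
    simp only [ofPred_and, ofPred_forall]
    exact (isClosed_iInter fun n => (isClosed_discrete _).preimage (hcont n)).inter
      (isClosed_iInter fun n => isClosed_iInter fun m => isClosed_iInter fun _ =>
        (isClosed_discrete {p : Set Ω × Set Ω | p.1 ⊆ p.2}).preimage
          ((hcont m).prodMk (hcont n)))
  exact isCompact_iff_compactSpace.1 <|
    (isCompact_univ_pi fun n => (D n).finite_toSet.isCompact).of_isClosed_subset hclosed
      fun x hx n _ => hx.1 n

variable [MeasurableSpace Ω] (hp : IsPartitionSeq D)
include hp

theorem apply_eq_of_subset (x : Kt D) {n m : ℕ} (hnm : n ≤ m) {A : Set Ω} (hA : A ∈ D n)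
    (hxA : x.1 m ⊆ A) : x.1 n = A := by
  obtain ⟨w, hw⟩ := hp.nonempty (x.2.1 m)
  exact hp.eq_of_mem_of_mem (x.2.1 n) hA (x.2.2 n m hnm hw) (hxA hw)

theorem exists_apply_eq {m : ℕ} {B : Set Ω} (hB : B ∈ D m) : ∃ x : Kt D, x.1 m = B := by
  obtain ⟨w, hw⟩ := hp.nonempty hB
  choose x hx hwx using fun k => hp.exists_mem k w
  exact ⟨⟨x, hx, fun k k' hkk' => hp.subset_of_mem hkk' (hx k) (hx k') (hwx k) (hwx k')⟩,
    hp.eq_of_mem_of_mem (hx m) hB (hwx m) hw⟩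

theorem isTopologicalBasis :
    IsTopologicalBasis {s : Set (Kt D) | ∃ n, ∃ A ∈ D n, s = {x | x.1 n = A}} := by
  refine isTopologicalBasis_of_isOpen_of_nhds ?_ fun x U hxU hU => ?_
  · rintro _ ⟨n, A, -, rfl⟩
    exact isOpen_setOf_apply_eq n A
  obtain ⟨V, hV, rfl⟩ := isOpen_induced_iff.1 hU
  obtain ⟨I, u, hu, hIV⟩ := isOpen_pi_iff.1 hV x.1 hxU
  refine ⟨{z | z.1 (I.sup id) = x.1 (I.sup id)}, ⟨_, _, x.2.1 _, rfl⟩, rfl,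
    fun z hz => hIV fun i hi => ?_⟩
  have hi' : i ≤ I.sup id := Finset.le_sup (f := id) hi
  rw [show z.1 i = x.1 i from apply_eq_of_subset hp z hi' (x.2.1 i) (hz ▸ x.2.2 i _ hi')]
  exact (hu i hi).2

theorem secondCountableTopology : SecondCountableTopology (Kt D) := by
  refine (isTopologicalBasis hp).secondCountableTopology <| (countable_iUnion fun n =>
    ((D n).finite_toSet.image fun A => {x : Kt D | x.1 n = A}).countable).mono ?_
  rintro _ ⟨n, A, hA, rfl⟩
  exact mem_iUnion.2 ⟨n, A, hA, rfl⟩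

end Kt

section Perturbation

variable [MeasurableSpace Ω] {P : Measure Ω} [IsFiniteMeasure P] {D : ℕ → Finset (Set Ω)}

/-- Pigeonhole among the arbitrarily many atoms below `A` (`exists_le_card_atomsIn`). -/
theorem exists_atom_subset_measureReal_mul_lt (hp : IsPartitionSeq D)
    (hsplit : ∀ n, ∀ A ∈ D n, ∃ m, n < m ∧ A ∉ D m) {f : ℕ → Set Ω → ℝ} {R : ℝ}
    (hR : ∀ m, ∑ B ∈ D m, P.real B * |f m B| ≤ R) {n : ℕ} {A : Set Ω} (hA : A ∈ D n) (N : ℕ)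
    {δ : ℝ} (hδ : 0 < δ) : ∃ m ≥ N, ∃ B ∈ D m, B ⊆ A ∧ P.real B * (1 + |f m B|) < δ := by
  obtain ⟨K, hK⟩ := exists_nat_gt ((P.real univ + R) / δ)
  obtain ⟨m, hNm, -, hKm⟩ := exists_le_card_atomsIn hp hsplit hA K N
  by_contra! hbig
  have hlower : (atomsIn D m A).card • δ ≤ ∑ B ∈ atomsIn D m A, P.real B * (1 + |f m B|) :=
    Finset.card_nsmul_le_sum _ _ _ fun B hB =>
      hbig m hNm B (mem_atomsIn.1 hB).1 (mem_atomsIn.1 hB).2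
  have hupper : ∑ B ∈ atomsIn D m A, P.real B * (1 + |f m B|) ≤ P.real univ + R :=
    calc ∑ B ∈ atomsIn D m A, P.real B * (1 + |f m B|)
        ≤ ∑ B ∈ D m, P.real B * (1 + |f m B|) :=
          Finset.sum_le_sum_of_subset_of_nonneg (fun B hB => (mem_atomsIn.1 hB).1)
            fun _ _ _ => by positivity
      _ = ∑ B ∈ D m, P.real (univ ∩ B) + ∑ B ∈ D m, P.real B * |f m B| := by
          simp [mul_add, Finset.sum_add_distrib]
      _ ≤ P.real univ + R := by
          rw [hp.sum_measureReal_inter P MeasurableSet.univ]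
          linarith [hR m]
  rw [div_lt_iff₀ hδ] at hK
  rw [nsmul_eq_mul] at hlower
  nlinarith [(Nat.cast_le (α := ℝ)).2 hKm]

/-- The witness is `f + (t - f_m(B)) E[1_B | σ(D k)]`. -/
theorem Mart.exists_edist_le_and_apply_eq [Fact (IsPartitionSeq D)]
    (hpos : ∀ n, ∀ A ∈ D n, 0 < P A) (f : Mart P D 1) {m : ℕ} {B : Set Ω} (hB : B ∈ D m) (t : ℝ) :
    ∃ g : Mart P D 1, edist f g ≤ ENNReal.ofReal (P.real B * |t - f.1 m B|) ∧ g.1 m B = t := by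
  have hp : IsPartitionSeq D := Fact.out
  set c := t - f.1 m B
  have hnorm (a : ℝ) : martNorm P D 1 (fun k E => a * condProb P D B k E) ≤
      ENNReal.ofReal (P.real B * |a|) := by
    rw [martNorm_const_mul, ENNReal.ofReal_mul measureReal_nonneg, ofReal_measureReal, mul_comm,
      ← Real.enorm_eq_ofReal_abs]
    gcongr
    exact martNorm_condProb_le hp hpos (hp.measurableSet hB)
  refine ⟨⟨fun k E => f.1 k E + c * condProb P D B k E,
    f.2.1.add_const_mul hp (isMart_condProb hp hpos (hp.measurableSet hB)) c,
    ne_top_of_le_ne_top (ENNReal.add_ne_top.2 ⟨f.2.2, ne_top_of_le_ne_top ENNReal.ofReal_ne_top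
      (hnorm c)⟩) (martNorm_add_le hp _ _)⟩, ?_, ?_⟩
  · change martNorm P D 1 (fun k E => f.1 k E - (f.1 k E + c * condProb P D B k E)) ≤ _
    simpa [← neg_mul] using hnorm (-c)
  · change f.1 m B + c * condProb P D B m B = t
    rw [condProb_self hpos hB]
    ring

theorem Mart.dense_setOf_exists_apply_eq (hp : IsPartitionSeq D) (hA : AssumptionA P D) {n : ℕ}
    {A : Set Ω} (hAn : A ∈ D n) (N : ℕ) (t : ℝ) :
    Dense {g : Mart P D 1 | ∃ m ≥ N, ∃ B ∈ D m, B ⊆ A ∧ g.1 m B = t} := by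
  have : Fact (IsPartitionSeq D) := ⟨hp⟩
  refine fun f => EMetric.mem_closure_iff.2 fun ε hε => ?_
  obtain ⟨η, -, hη, hηε⟩ := ENNReal.lt_iff_exists_real_btwn.1 hε
  have hηpos : 0 < η := ENNReal.ofReal_pos.1 hη
  obtain ⟨m, hm, B, hB, hBA, hsmall⟩ := exists_atom_subset_measureReal_mul_lt hp hA.2
    (sum_measureReal_mul_le_martNorm hp f.2.2) hAn N (δ := η / (1 + |t|)) (by positivity)
  obtain ⟨g, hfg, hgB⟩ := Mart.exists_edist_le_and_apply_eq hA.1 f hB t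
  refine ⟨g, ⟨m, hm, B, hB, hBA, hgB⟩, hfg.trans_lt ((ENNReal.ofReal_le_ofReal ?_).trans_lt hηε)⟩
  rw [lt_div_iff₀ (by positivity), mul_assoc] at hsmall
  calc P.real B * |t - f.1 m B| ≤ P.real B * ((1 + |f.1 m B|) * (1 + |t|)) := by
        gcongr
        nlinarith [abs_sub t (f.1 m B), abs_nonneg t, abs_nonneg (f.1 m B)]
    _ ≤ η := hsmall.le

theorem Mart.continuous_apply_apply (hp : IsPartitionSeq D) (hpos : ∀ n, ∀ A ∈ D n, 0 < P A)
    (m : ℕ) : Continuous fun q : Mart P D 1 × Kt D => q.1.1 m (q.2.1 m) := by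
  have : Fact (IsPartitionSeq D) := ⟨hp⟩
  have hcont : Continuous fun q : Mart P D 1 × Set Ω => q.1.1 m q.2 :=
    continuous_prod_of_discrete_right.2 fun B =>
      (Mart.uniformContinuous_apply hpos m B).continuous
  exact hcont.comp (continuous_fst.prodMk
    ((continuous_apply (A := fun _ => Set Ω) m).comp (continuous_subtype_val.comp continuous_snd)))

end Perturbation

theorem dense_setOf_exists_mem_escapeSet [MeasurableSpace Ω] {P : Measure Ω} [IsFiniteMeasure P]
    {D : ℕ → Finset (Set Ω)} (hp : IsPartitionSeq D) (hA : AssumptionA P D) (i : ℕ ⊕ ℕ)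
    {V : Set (Kt D)} (hV : IsOpen V) (hne : V.Nonempty) :
    Dense {f : Mart P D 1 | ∃ x ∈ V,
      (f, x) ∈ escapeSet (fun m (q : Mart P D 1 × Kt D) => q.1.1 m (q.2.1 m)) i} := by
  obtain ⟨x₀, hx₀⟩ := hne
  obtain ⟨_, ⟨n, A, hAn, rfl⟩, -, hAV⟩ :=
    (Kt.isTopologicalBasis hp).exists_subset_of_mem_open hx₀ hV
  obtain ⟨k, t, ht⟩ : ∃ k : ℕ, ∃ t : ℝ, ∀ q : Mart P D 1 × Kt D, ∀ m ≥ k,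
      q.1.1 m (q.2.1 m) = t → q ∈ escapeSet (fun m q => q.1.1 m (q.2.1 m)) i := by
    rcases i with k | k
    · exact ⟨k, k + 1, fun q m hm hq => mem_biUnion hm (by simp [hq])⟩
    · exact ⟨k, -(k + 1), fun q m hm hq => mem_biUnion hm (by simp [hq])⟩
  refine (Mart.dense_setOf_exists_apply_eq hp hA hAn (max k n) t).mono ?_
  rintro f ⟨m, hm, B, hB, hBA, hfB⟩
  obtain ⟨x, hx⟩ := Kt.exists_apply_eq hp hB
  exact ⟨x, hAV (Kt.apply_eq_of_subset hp x (le_of_max_le_right hm) hAn (hx ▸ hBA)),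
    ht (f, x) m (le_of_max_le_left hm) (by simp [hx, hfB])⟩

/-- Theorem (main:pn for `Y = M₁`): the set of pairs `(f, x) ∈ M₁ × K` at which the
martingale `f` diverges in the strongest sense is a dense `G_δ` subset of `M₁ × K`;
in particular there is a dense `G_δ` set of martingales `f ∈ M₁` each of which diverges
in the strongest sense on a dense `G_δ` subset of `K`. -/
theorem statement0 [MeasurableSpace Ω] (P : Measure Ω) [IsProbabilityMeasure P]
    (D : ℕ → Finset (Set Ω)) (hpart : IsPartitionSeq D) (hA : AssumptionA P D) :
    (IsGδ {q : Mart P D 1 × Kt D | DivergesAt D q.1.1 q.2} ∧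
     Dense {q : Mart P D 1 × Kt D | DivergesAt D q.1.1 q.2}) ∧
    ∃ T : Set (Mart P D 1), IsGδ T ∧ Dense T ∧ ∀ f ∈ T,
      IsGδ {x : Kt D | DivergesAt D f.1 x} ∧ Dense {x : Kt D | DivergesAt D f.1 x} := by
  have := Kt.secondCountableTopology hpart
  have := Mart.baireSpace (P := P) hpart hA.1
  set F : ℕ → Mart P D 1 × Kt D → ℝ := fun m q => q.1.1 m (q.2.1 m)
  have hW : ∀ i, IsOpen (escapeSet F i) :=
    isOpen_escapeSet (Mart.continuous_apply_apply hpart hA.1)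
  have hWsec (f : Mart P D 1) (i) : IsOpen {x : Kt D | (f, x) ∈ escapeSet F i} :=
    (hW i).preimage (Continuous.prodMk_right f)
  have hS : {q : Mart P D 1 × Kt D | DivergesAt D q.1.1 q.2} = ⋂ i, escapeSet F i :=
    setOf_limsup_eq_top_and_liminf_eq_bot F
  have hsec (f : Mart P D 1) :
      {x : Kt D | DivergesAt D f.1 x} = ⋂ i, {x | (f, x) ∈ escapeSet F i} :=
    (setOf_limsup_eq_top_and_liminf_eq_bot _).trans
      (iInter_congr fun i => (preimage_escapeSet F (Prod.mk f) i).symm)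
  set T := {f : Mart P D 1 | ∀ i, Dense {x | (f, x) ∈ escapeSet F i}}
  have hT : Dense T := dense_setOf_forall_dense hW fun i _ hV hne =>
    dense_setOf_exists_mem_escapeSet hpart hA i hV hne
  have hTsec (f) (hf : f ∈ T) : Dense {x : Kt D | DivergesAt D f.1 x} :=
    hsec f ▸ dense_iInter_of_isOpen (hWsec f) hf
  exact ⟨⟨hS ▸ IsGδ.iInter_of_isOpen hW, dense_of_forall_dense_section hT hTsec⟩,
    T, isGδ_setOf_forall_dense hW, hT,
    fun f hf => ⟨hsec f ▸ IsGδ.iInter_of_isOpen (hWsec f), hTsec f hf⟩⟩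

end MartingalePaper
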